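/- arXiv:1206.0551 — 8 statements merged into one kernel-verified Lean document; each statement's English description precedes it below -/
import Mathlib

section
/- Let X be a compact metric space, T : X → X continuous, and F : (0,∞) → [0,∞) non-increasing. If x ∈ X is F-aperiodic, then for every ε > 0 and all integers 0 ≤ s₁ < s₂ ≤ F(ε), the open balls B(T^{s₁}x, ε/2) and B(T^{s₂}x, ε/2) are disjoint; consequently F(ε) ≤ N(X, ε/2), the maximal number of disjoint metric balls of radius ε/2 in X. -/
/-!
If `T^[s₁] x` and `T^[s₂] x` were within `ε` of each other for some `s₁ < s₂ ≤ F ε`, the return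
time `s₂ - s₁ ≤ F ε` would contradict `F`-aperiodicity; so by the triangle inequality their
`ε / 2`-balls are disjoint. If `F ε` exceeded `N`, the `N + 1` points `T^[0] x, …, T^[N] x` would
then carry `N + 1` pairwise disjoint `ε / 2`-balls.
-/

open Metric

section

variable {X : Type*} [PseudoMetricSpace X]

theorem Finset.card_le_of_pairwise_disjoint_balls {ι : Type*} {f : ι → X} {r : ℝ} (hr : 0 < r)
    {N : ℕ} (hN : ∀ t : Finset X,
      (t : Set X).Pairwise (fun a b => Disjoint (ball a r) (ball b r)) → t.card ≤ N)
    {s : Finset ι} (hs : (s : Set ι).Pairwise fun i j => Disjoint (ball (f i) r) (ball (f j) r)) :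
    s.card ≤ N := by
  classical
  have hinj : Set.InjOn f s := Set.injOn_iff_pairwise_ne.mpr <| hs.imp fun i j hij heq => by
    rw [heq, disjoint_self] at hij
    exact (nonempty_ball.mpr hr).ne_empty hij
  rw [← Finset.card_image_of_injOn hinj]
  exact hN _ <| by rwa [Finset.coe_image, hinj.pairwise_image]

def IsFAperiodic (T : X → X) (F : ℝ → ℝ) (x : X) : Prop :=
  ∀ i : ℕ, ∀ ε : ℝ, 0 < ε → ∀ s : ℕ, 1 ≤ s → dist (T^[i] x) (T^[i + s] x) < ε → F ε < s

namespace IsFAperiodic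

variable {T : X → X} {F : ℝ → ℝ} {x : X} {ε : ℝ}

theorem le_dist_iterate (hx : IsFAperiodic T F x) (hε : 0 < ε) {s₁ s₂ : ℕ} (hlt : s₁ < s₂)
    (hle : (s₂ : ℝ) ≤ F ε) : ε ≤ dist (T^[s₁] x) (T^[s₂] x) := by
  by_contra! hdist
  have hret := hx s₁ ε hε (s₂ - s₁) (by omega) (by rwa [Nat.add_sub_cancel' hlt.le])
  have hsub : ((s₂ - s₁ : ℕ) : ℝ) ≤ s₂ := by exact_mod_cast Nat.sub_le s₂ s₁
  linarith

theorem disjoint_ball_iterate (hx : IsFAperiodic T F x) (hε : 0 < ε) {s₁ s₂ : ℕ}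
    (hlt : s₁ < s₂) (hle : (s₂ : ℝ) ≤ F ε) :
    Disjoint (ball (T^[s₁] x) (ε / 2)) (ball (T^[s₂] x) (ε / 2)) :=
  ball_disjoint_ball <| by rw [add_halves]; exact hx.le_dist_iterate hε hlt hle

theorem pairwise_disjoint_ball_iterate (hx : IsFAperiodic T F x) (hε : 0 < ε) {n : ℕ}
    (hn : (n : ℝ) ≤ F ε) :
    (Set.Iic n).Pairwise fun i j => Disjoint (ball (T^[i] x) (ε / 2)) (ball (T^[j] x) (ε / 2)) := by
  have hle : ∀ i ∈ Set.Iic n, (i : ℝ) ≤ F ε := fun i hi => (Nat.cast_le.mpr hi).trans hn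
  intro i hi j hj hij
  rcases hij.lt_or_gt with h | h
  · exact hx.disjoint_ball_iterate hε h (hle j hj)
  · exact (hx.disjoint_ball_iterate hε h (hle i hi)).symm

end IsFAperiodic

end

theorem faperiodic_disjoint_balls_general {X : Type*} [MetricSpace X]
    (T : X → X) (F : ℝ → ℝ) (x : X)
    (hx : ∀ i : ℕ, ∀ ε : ℝ, 0 < ε → ∀ s : ℕ, 1 ≤ s →
      dist (T^[i] x) (T^[i + s] x) < ε → F ε < s) :
    ∀ ε : ℝ, 0 < ε →
      (∀ s₁ s₂ : ℕ, s₁ < s₂ → (s₂ : ℝ) ≤ F ε →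
        Disjoint (Metric.ball (T^[s₁] x) (ε / 2)) (Metric.ball (T^[s₂] x) (ε / 2))) ∧
      (∀ N : ℕ, (∀ t : Finset X,
          (t : Set X).Pairwise
            (fun a b => Disjoint (Metric.ball a (ε / 2)) (Metric.ball b (ε / 2))) →
          t.card ≤ N) → F ε ≤ N) := by
  have hx : IsFAperiodic T F x := hx
  intro ε hε
  refine ⟨fun s₁ s₂ => hx.disjoint_ball_iterate hε, fun N hN => ?_⟩
  by_contra! hN_lt
  have hcard := Finset.card_le_of_pairwise_disjoint_balls (half_pos hε) hN
    (s := Finset.Iic N) (by rw [Finset.coe_Iic]; exact hx.pairwise_disjoint_ball_iterate hε hN_lt.le)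
  rw [Nat.card_Iic] at hcard
  omega

/-- For an F-aperiodic point `x`, the balls `B(T^{s₁}x, ε/2)` and
`B(T^{s₂}x, ε/2)` are disjoint whenever `0 ≤ s₁ < s₂ ≤ F ε`; consequently
`F ε ≤ N(X, ε/2)`, the maximal number of pairwise disjoint balls of radius `ε/2`. -/
theorem faperiodic_disjoint_balls {X : Type*} [MetricSpace X] [CompactSpace X]
    (T : X → X) (hT : Continuous T) (F : ℝ → ℝ)
    (hF : ∀ ε ε' : ℝ, 0 < ε → ε ≤ ε' → F ε' ≤ F ε) (x : X)
    (hx : ∀ i : ℕ, ∀ ε : ℝ, 0 < ε → ∀ s : ℕ, 1 ≤ s →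
      dist (T^[i] x) (T^[i + s] x) < ε → F ε < s) :
    ∀ ε : ℝ, 0 < ε →
      (∀ s₁ s₂ : ℕ, s₁ < s₂ → (s₂ : ℝ) ≤ F ε →
        Disjoint (Metric.ball (T^[s₁] x) (ε / 2)) (Metric.ball (T^[s₂] x) (ε / 2))) ∧
      (∀ N : ℕ, (∀ t : Finset X,
          (t : Set X).Pairwise
            (fun a b => Disjoint (Metric.ball a (ε / 2)) (Metric.ball b (ε / 2))) →
          t.card ≤ N) → F ε ≤ N) :=
  faperiodic_disjoint_balls_general T F x hx
end

section
/- Conversely, if α ∈ ℝ \ ℚ satisfies |α − p/q| > c/q² for all p ∈ ℤ, q ∈ ℕ with q ≥ 1 and some constant c > 0, then the point [0] ∈ ℝ/ℤ is F_c-aperiodic for the rotation T_α, where F_c(t) = c/t. -/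
theorem dist_nsmul_add_nsmul {E : Type*} [SeminormedAddCommGroup E] (a : E) (i s : ℕ) :
    dist (i • a) ((i + s) • a) = ‖s • a‖ := by
  rw [add_nsmul, dist_self_add_right]

theorem abs_sub_div_eq_abs_mul_sub_div {α p q : ℝ} (hq : 0 < q) :
    |α - p / q| = |q * α - p| / q := by
  rw [eq_div_iff hq.ne', ← abs_of_pos hq, ← abs_mul, abs_of_pos hq, sub_mul,
    div_mul_cancel₀ _ hq.ne', mul_comm]

theorem div_lt_norm_nsmul_of_badly_approximable {α c : ℝ}
    (h : ∀ (p : ℤ) (q : ℕ), 1 ≤ q → c / (q : ℝ) ^ 2 < |α - p / q|) {q : ℕ} (hq : 1 ≤ q) :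
    c / q < ‖q • (α : UnitAddCircle)‖ := by
  have hq' : (0 : ℝ) < q := by exact_mod_cast hq
  have hbound := h (round (q * α)) q hq
  rw [abs_sub_div_eq_abs_mul_sub_div hq', pow_two, ← div_div,
    div_lt_div_iff_of_pos_right hq'] at hbound
  rwa [← AddCircle.coe_nsmul, nsmul_eq_mul, UnitAddCircle.norm_eq]

theorem faperiodic_of_badly_approximable_general (α : ℝ) (c : ℝ)
    (h : ∀ (p : ℤ) (q : ℕ), 1 ≤ q → c / (q : ℝ) ^ 2 < |α - p / q|) :
    ∀ i : ℕ, ∀ ε : ℝ, 0 < ε → ∀ s : ℕ, 1 ≤ s →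
      dist ((fun x : AddCircle (1 : ℝ) => x + (α : AddCircle (1 : ℝ)))^[i] 0)
        ((fun x : AddCircle (1 : ℝ) => x + (α : AddCircle (1 : ℝ)))^[i + s] 0) < ε →
      c / ε < s := by
  intro i ε hε s hs hd
  rw [add_right_iterate_apply_zero, add_right_iterate_apply_zero, dist_nsmul_add_nsmul] at hd
  have hcs : c / s < ε := (div_lt_norm_nsmul_of_badly_approximable h hs).trans hd
  have hs' : (0 : ℝ) < s := by exact_mod_cast hs
  rw [div_lt_iff₀ hs'] at hcs
  rwa [div_lt_iff₀ hε, mul_comm]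

/-- If `α` is badly approximable with constant `c > 0`, then `[0]` is
`F_c`-aperiodic for the rotation by `α` on `ℝ/ℤ`, where `F_c(t) = c/t`. -/
theorem faperiodic_of_badly_approximable (α : ℝ) (hα : Irrational α) (c : ℝ) (hc : 0 < c)
    (h : ∀ (p : ℤ) (q : ℕ), 1 ≤ q → c / (q : ℝ) ^ 2 < |α - p / q|) :
    ∀ i : ℕ, ∀ ε : ℝ, 0 < ε → ∀ s : ℕ, 1 ≤ s →
      dist ((fun x : AddCircle (1 : ℝ) => x + (α : AddCircle (1 : ℝ)))^[i] 0)
        ((fun x : AddCircle (1 : ℝ) => x + (α : AddCircle (1 : ℝ)))^[i + s] 0) < ε →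
      c / ε < s :=
  faperiodic_of_badly_approximable_general α c h
end

section
/- The Morse–Thue sequence, extended to a biinfinite word w by w(−n) = w(n−1), is φ-aperiodic for the function φ(l) = l: whenever a subword of w of length l+1 starting at position i reappears shifted by s ≥ 1, then s > l. -/
/-!
The two-sided word `⋯ t(1) t(0) t(0) t(1) ⋯` is the image under the Thue–Morse morphism
`μ : 0 ↦ 01, 1 ↦ 10` of the same word with its left half complemented, and that word is in turn the
`μ`-image of the original one. In a `μ`-image an overlap of even period `2t` desubstitutes to an
overlap of period `t`, while an overlap of odd period is impossible as soon as the preimage is itself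
a `μ`-image (it would contain three equal consecutive letters). Strong induction on the period
shows that every word of such a self-desubstituting family is overlap-free.
-/

/-- `x (i) ⋯ x (i + 2s)` is an overlap `aWaWa` with `|aW| = s`. -/
def HasOverlap {α : Type*} (x : ℤ → α) (i : ℤ) (s : ℕ) : Prop :=
  ∀ n, i ≤ n → n ≤ i + s → x n = x (n + s)

def OverlapFree {α : Type*} (x : ℤ → α) : Prop :=
  ∀ i s, 1 ≤ s → ¬HasOverlap x i s

/-- `x` is the image of `y` under the Thue–Morse morphism `0 ↦ 01`, `1 ↦ 10`. -/
def IsThueMorseImage (x y : ℤ → Bool) : Prop :=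
  ∀ n, x (2 * n) = y n ∧ x (2 * n + 1) = !y n

namespace IsThueMorseImage

variable {x y z : ℤ → Bool}

theorem succ_eq_not (h : IsThueMorseImage x y) (n : ℤ) : x (2 * n + 1) = !x (2 * n) := by
  rw [(h n).1, (h n).2]

theorem not_three_eq (h : IsThueMorseImage x y) (k : ℤ) :
    ¬(x k = x (k + 1) ∧ x (k + 1) = x (k + 2)) := by
  rintro ⟨h₁, h₂⟩
  obtain ⟨c, rfl | rfl⟩ := Int.even_or_odd' k
  · simp [h.succ_eq_not] at h₁
  · have := h.succ_eq_not (c + 1)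
    rw [show 2 * (c + 1) + 1 = 2 * c + 1 + 2 by ring, show 2 * (c + 1) = 2 * c + 1 + 1 by ring,
      ← h₂] at this
    simp at this

theorem hasOverlap_half (h : IsThueMorseImage x y) {i : ℤ} {t : ℕ}
    (hx : HasOverlap x i (2 * t)) : HasOverlap y (i / 2) t := by
  intro m hm₁ hm₂
  by_cases hi : i ≤ 2 * m
  · have := hx (2 * m) hi (by push_cast; omega)
    rwa [show 2 * m + ((2 * t : ℕ) : ℤ) = 2 * (m + t) by push_cast; ring,
      (h _).1, (h _).1] at this
  · have := hx (2 * m + 1) (by omega) (by push_cast; omega)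
    rwa [show 2 * m + 1 + ((2 * t : ℕ) : ℤ) = 2 * (m + t) + 1 by push_cast; ring,
      (h _).2, (h _).2, Bool.not_inj_iff] at this

/-- Matching the two letters of each block of `x` against the block `r` places further on gives
`y (m + r) = !y m = y (m + r + 1)`; for `r = 1` this clashes with the next block, and for `r ≥ 2`
two consecutive blocks give three equal letters in `y`. -/
theorem not_hasOverlap_odd (hxy : IsThueMorseImage x y) (hyz : IsThueMorseImage y z)
    (i : ℤ) (r : ℕ) : ¬HasOverlap x i (2 * r + 1) := by
  intro hx
  have at_even : ∀ m, i ≤ 2 * m → 2 * m ≤ i + 2 * r + 1 → y m = !y (m + r) := by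
    intro m hm₁ hm₂
    have := hx (2 * m) hm₁ (by push_cast; omega)
    rwa [show 2 * m + ((2 * r + 1 : ℕ) : ℤ) = 2 * (m + r) + 1 by push_cast; ring,
      (hxy _).1, (hxy _).2] at this
  have at_pair :
      ∀ m, i ≤ 2 * m → 2 * m + 1 ≤ i + 2 * r + 1 → y (m + r) = y (m + r + 1) := by
    intro m hm₁ hm₂
    have := hx (2 * m + 1) (by omega) (by push_cast; omega)
    rwa [show 2 * m + 1 + ((2 * r + 1 : ℕ) : ℤ) = 2 * (m + r + 1) by push_cast; ring,
      (hxy _).1, (hxy _).2, at_even m hm₁ (by omega), Bool.not_not] at this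
  obtain ⟨p, hp₁, hp₂⟩ : ∃ p, i ≤ 2 * p ∧ 2 * p ≤ i + 1 :=
    ⟨(i + 1) / 2, by omega, by omega⟩
  obtain rfl | rfl | hr : r = 0 ∨ r = 1 ∨ 2 ≤ r := by omega
  · simpa using at_even p hp₁ (by omega)
  · have h₁ := at_even (p + 1) (by omega) (by omega)
    have h₂ := at_pair p hp₁ (by omega)
    push_cast at h₁ h₂
    rw [h₂] at h₁
    simp at h₁
  · refine hyz.not_three_eq (p + r) ⟨at_pair p hp₁ (by omega), ?_⟩
    rw [show p + r + 1 = p + 1 + r by ring, show p + r + 2 = p + 1 + r + 1 by ring]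
    exact at_pair (p + 1) (by omega) (by omega)

end IsThueMorseImage

theorem overlapFree_of_forall_mem {S : Set (ℤ → Bool)}
    (hS : ∀ x ∈ S, ∃ y ∈ S, IsThueMorseImage x y) {x : ℤ → Bool} (hx : x ∈ S) :
    OverlapFree x := by
  intro i s hs
  induction s using Nat.strong_induction_on generalizing x i with
  | _ s ih =>
    obtain ⟨y, hy, hxy⟩ := hS x hx
    obtain ⟨z, -, hyz⟩ := hS y hy
    obtain ⟨t, rfl | rfl⟩ := Nat.even_or_odd' s
    · exact fun h => ih t (by omega) hy (i / 2) (by omega) (hxy.hasOverlap_half h)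
    · exact hxy.not_hasOverlap_odd hyz i t

def thueMorse (n : ℕ) : Bool :=
  ((Nat.digits 2 n).count 1).bodd

theorem thueMorse_two_mul (n : ℕ) : thueMorse (2 * n) = thueMorse n := by
  rcases Nat.eq_zero_or_pos n with rfl | hn
  · rfl
  · simp [thueMorse, Nat.digits_base_mul one_lt_two hn]

theorem thueMorse_two_mul_add_one (n : ℕ) : thueMorse (2 * n + 1) = !thueMorse n := by
  rw [thueMorse, add_comm, Nat.digits_add 2 one_lt_two 1 n one_lt_two (Or.inl one_ne_zero)]
  simp [thueMorse, Nat.bodd_succ]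

/-- The word `⋯ t(2) t(1) t(0) t(0) t(1) t(2) ⋯` (position `-1 - n` carries `t(n)`), with its left
half complemented when `b = true`; desubstituting toggles `b`. -/
def thueMorseTwoSided (b : Bool) : ℤ → Bool
  | .ofNat n => thueMorse n
  | .negSucc n => xor b (thueMorse n)

theorem isThueMorseImage_thueMorseTwoSided (b : Bool) :
    IsThueMorseImage (thueMorseTwoSided b) (thueMorseTwoSided !b) := by
  rintro (n | n)
  · exact ⟨thueMorse_two_mul n, thueMorse_two_mul_add_one n⟩
  · rw [show 2 * Int.negSucc n + 1 = .negSucc (2 * n) by omega,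
      show 2 * Int.negSucc n = .negSucc (2 * n + 1) by omega]
    simp only [thueMorseTwoSided, thueMorse_two_mul, thueMorse_two_mul_add_one]
    cases b <;> simp

theorem overlapFree_thueMorseTwoSided (b : Bool) : OverlapFree (thueMorseTwoSided b) :=
  overlapFree_of_forall_mem (S := Set.range thueMorseTwoSided)
    (by
      rintro _ ⟨b, rfl⟩
      exact ⟨_, ⟨!b, rfl⟩, isThueMorseImage_thueMorseTwoSided b⟩)
    ⟨b, rfl⟩

/-- The Morse–Thue sequence (t n = parity of the number of 1's in the
binary expansion of n), extended to a biinfinite word by `w(−n) = w(n−1)`, is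
φ-aperiodic for `φ(l) = l`: any repetition of a subword of length `l+1` at shift
`s ≥ 1` forces `s > l`. -/
theorem morseThue_phiaperiodic (w : ℤ → ℕ)
    (hpos : ∀ n : ℕ, w (n : ℤ) = ((Nat.digits 2 n).count 1) % 2)
    (hneg : ∀ n : ℕ, 1 ≤ n → w (-(n : ℤ)) = w ((n : ℤ) - 1)) :
    ∀ (i : ℤ) (l s : ℕ), 1 ≤ s →
      (∀ j : ℕ, j ≤ l → w (i + j) = w (i + s + j)) → l < s := by
  intro i l s hs H
  by_contra! hsl
  have hw : ∀ n, (w n).bodd = thueMorseTwoSided false n := by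
    have bodd_mod_two (c : ℕ) : (c % 2).bodd = c.bodd := by
      conv_rhs => rw [← Nat.mod_add_div c 2]
      simp [Nat.bodd_add, Nat.bodd_mul]
    rintro (n | n)
    · exact (hpos n).symm ▸ bodd_mod_two _
    · rw [thueMorseTwoSided, Bool.false_xor, show Int.negSucc n = -((n + 1 : ℕ) : ℤ) by omega,
        hneg _ n.succ_pos, show ((n + 1 : ℕ) : ℤ) - 1 = n by omega, hpos, bodd_mod_two,
        thueMorse]
  refine overlapFree_thueMorseTwoSided false i s hs fun n hn₁ hn₂ => ?_
  have := H (n - i).toNat (by omega)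
  rw [show i + ((n - i).toNat : ℤ) = n by omega,
    show i + s + ((n - i).toNat : ℤ) = n + s by omega] at this
  rw [← hw, ← hw, this]
end

section
/- Let φ : ℕ → [0,∞) be non-decreasing and unbounded with right-inverse ℓ(s) = min{j : φ(j) ≥ s}, and equip Σ = A^ℤ with the metric d̄(w, w̄) = 2^{−max{i : w(j)=w̄(j) for |j|≤i}}. If w ∈ Σ is φ-aperiodic, then for every periodic word w̄ of period s ≥ 1 and every i ∈ ℤ, d̄(T^i w, w̄) > 2^{−(s+ℓ(s))/2}. -/
/-!
If the shifted word agrees with an `s`-periodic word on `|j| < a`, it repeats itself with shift `s`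
along `2a - 1` consecutive letters, so φ-aperiodicity gives `φ (2a - 2 - s) < s ≤ φ (ℓ s)` and, by
monotonicity, `2a - 2 - s < ℓ s`. As `d̄ = 2^{1-a}` for the largest such `a`, this is the bound.
-/

open Classical

/-- The metric `d̄(w,w̄) = 2^{-a(w,w̄)}` on `A^ℤ`, where `a(w,w̄)` is the largest `i`
such that `w` and `w̄` agree on all `|j| ≤ i`. -/
noncomputable def dbar {A : Type*} (w w' : ℤ → A) : ℝ :=
  if w = w' then 0
  else (2 : ℝ) ^ ((1 : ℤ) - (↑(sInf {n : ℕ | ∃ j : ℤ, |j| ≤ (n : ℤ) ∧ w j ≠ w' j}) : ℤ))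

section

variable {A : Type*}

def IsPhiAperiodic (φ : ℕ → ℝ) (w : ℤ → A) : Prop :=
  ∀ (i : ℤ) (l s : ℕ), 1 ≤ s → (∀ j : ℕ, j ≤ l → w (i + j) = w (i + s + j)) → φ l < s

theorem IsPhiAperiodic.shift {φ : ℕ → ℝ} {w : ℤ → A} (hw : IsPhiAperiodic φ w) (c : ℤ) :
    IsPhiAperiodic φ (fun j => w (j + c)) := by
  intro i l s hs h
  refine hw (i + c) l s hs fun j hj => ?_
  convert h j hj using 2 <;> ring

theorem two_rpow_neg_lt_dbar {w w' : ℤ → A} (r : ℝ)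
    (h : ∀ a : ℕ, (∀ j : ℤ, |j| < a → w j = w' j) → (a : ℝ) < r + 1) :
    (2 : ℝ) ^ (-r) < dbar w w' := by
  by_cases heq : w = w'
  · obtain ⟨a, ha⟩ := exists_nat_gt (r + 1)
    exact absurd (h a fun j _ => congrFun heq j) ha.not_gt
  set S := {n : ℕ | ∃ j : ℤ, |j| ≤ (n : ℤ) ∧ w j ≠ w' j}
  have hagree : ∀ j : ℤ, |j| < sInf S → w j = w' j := by
    intro j hj
    by_contra hne
    have hmem : j.natAbs ∈ S := ⟨j, by rw [Int.abs_eq_natAbs], hne⟩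
    rw [Int.abs_eq_natAbs] at hj
    have := Nat.sInf_le hmem
    omega
  rw [dbar, if_neg heq, ← Real.rpow_intCast, Real.rpow_lt_rpow_left_iff one_lt_two]
  push_cast
  linarith [h _ hagree]

theorem IsPhiAperiodic.two_mul_le_of_agree {φ : ℕ → ℝ} (hφ : Monotone φ) {u v : ℤ → A}
    (hu : IsPhiAperiodic φ u) {s L a : ℕ} (hs : 1 ≤ s) (hv : Function.Periodic v s)
    (hL : (s : ℝ) ≤ φ L) (hagree : ∀ j : ℤ, |j| < a → u j = v j) :
    2 * a ≤ s + L + 1 := by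
  by_contra! hlong
  set l := 2 * a - 2 - s
  have hwindow : ∀ j : ℕ, j ≤ l → u (1 - a + j) = u (1 - a + s + j) := by
    intro j hj
    have hj' : (j : ℤ) ≤ 2 * a - 2 - s := by omega
    rw [hagree _ (by rw [abs_lt]; omega), hagree _ (by rw [abs_lt]; omega), add_right_comm,
      hv]
  have hlt := hu (1 - a) l s hs hwindow
  linarith [hφ (show L ≤ l by omega)]

end

theorem phiaperiodic_far_from_periodic_general {A : Type*} (φ : ℕ → ℝ) (hmono : Monotone φ)
    (hunb : ∀ C : ℝ, ∃ j : ℕ, C < φ j)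
    (w : ℤ → A)
    (hw : ∀ (i : ℤ) (l s : ℕ), 1 ≤ s →
      (∀ j : ℕ, j ≤ l → w (i + j) = w (i + s + j)) → φ l < s)
    (wbar : ℤ → A) (s : ℕ) (hs : 1 ≤ s) (hper : ∀ i : ℤ, wbar i = wbar (i + s)) :
    ∀ i : ℤ,
      (2 : ℝ) ^ (-(((s : ℝ) + (sInf {j : ℕ | (s : ℝ) ≤ φ j} : ℕ)) / 2)) <
        dbar (fun j => w (j + i)) wbar := by
  intro i
  set L := sInf {j : ℕ | (s : ℝ) ≤ φ j}
  have hL : (s : ℝ) ≤ φ L := Nat.sInf_mem <| (hunb s).imp fun _ => le_of_lt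
  refine two_rpow_neg_lt_dbar _ fun a hagree => ?_
  have hbound := (IsPhiAperiodic.shift hw i).two_mul_le_of_agree hmono hs
    (fun j => (hper j).symm) hL hagree
  have : (2 * a : ℝ) ≤ s + L + 1 := by exact_mod_cast hbound
  linarith

/-- If `w` is φ-aperiodic, then for every periodic word `w̄` of period
`s ≥ 1` and every `i ∈ ℤ`, `d̄(T^i w, w̄) > 2^{−(s+ℓ(s))/2}`, where
`ℓ(s) = min{j : φ(j) ≥ s}`. -/
theorem phiaperiodic_far_from_periodic {A : Type*} (φ : ℕ → ℝ) (hmono : Monotone φ)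
    (hnonneg : ∀ l : ℕ, 0 ≤ φ l) (hunb : ∀ C : ℝ, ∃ j : ℕ, C < φ j)
    (w : ℤ → A)
    (hw : ∀ (i : ℤ) (l s : ℕ), 1 ≤ s →
      (∀ j : ℕ, j ≤ l → w (i + j) = w (i + s + j)) → φ l < s)
    (wbar : ℤ → A) (s : ℕ) (hs : 1 ≤ s) (hper : ∀ i : ℤ, wbar i = wbar (i + s)) :
    ∀ i : ℤ,
      (2 : ℝ) ^ (-(((s : ℝ) + (sInf {j : ℕ | (s : ℝ) ≤ φ j} : ℕ)) / 2)) <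
        dbar (fun j => w (j + i)) wbar :=
  phiaperiodic_far_from_periodic_general φ hmono hunb w hw wbar s hs hper
end

section
/- With the setup as before, if a word w ∈ Σ satisfies d̄(T^i w, w̄) > 2^{−(s+ℓ(s)−1)/2} for every periodic word w̄ of period s ≥ 1 and every i ∈ ℤ, then w is φ-aperiodic. -/
open Classical

/-!
If `w(i + j) = w(i + s + j)` for `0 ≤ j ≤ l`, then `w` is `s`-periodic on the window
`[i, i + l + s]`, so centring the window at `i + m` with `m = ⌊(l + s)/2⌋`, the shifted word
agrees with a word of period `s` on `|j| ≤ m` and lies within `2^{-m}` of it. If moreover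
`φ(l) ≥ s`, then `ℓ(s) ≤ l`, and `2m ≥ s + l - 1 ≥ s + ℓ(s) - 1` contradicts the hypothesis.
-/

section PeriodicWords

variable {A : Type*}

theorem dbar_le_of_eqOn {w w' : ℤ → A} (m : ℕ) (h : ∀ j : ℤ, |j| ≤ m → w j = w' j) :
    dbar w w' ≤ 2 ^ (-(m : ℝ)) := by
  unfold dbar
  split_ifs with heq
  · positivity
  set S := {n : ℕ | ∃ j : ℤ, |j| ≤ (n : ℤ) ∧ w j ≠ w' j}
  have hS : S.Nonempty := by
    obtain ⟨j, hj⟩ := Function.ne_iff.mp heq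
    exact ⟨j.natAbs, j, by rw [Int.abs_eq_natAbs], hj⟩
  have hm : m < sInf S := by
    obtain ⟨j, hj, hne⟩ := Nat.sInf_mem hS
    by_contra! hle
    exact hne (h j (by omega))
  rw [← Real.rpow_intCast]
  gcongr
  · norm_num
  · have : (m : ℝ) + 1 ≤ sInf S := by exact_mod_cast hm
    push_cast
    linarith

def periodicExtension (w : ℤ → A) (i : ℤ) (s : ℕ) : ℤ → A := fun j => w (i + j % s)

theorem periodicExtension_periodic (w : ℤ → A) (i : ℤ) (s : ℕ) :
    Function.Periodic (periodicExtension w i s) s := by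
  intro j
  simp only [periodicExtension, Int.add_emod_right]

theorem eq_periodicExtension_of_agree {w : ℤ → A} {i : ℤ} {l s : ℕ} (hs : 0 < s)
    (hagree : ∀ j : ℕ, j ≤ l → w (i + j) = w (i + s + j)) {t : ℤ} (h0 : 0 ≤ t)
    (ht : t ≤ l + s) : w (i + t) = periodicExtension w i s t := by
  lift t to ℕ using h0
  induction t using Nat.strong_induction_on with
  | _ t ih =>
    rcases lt_or_ge t s with hts | hst
    · rw [periodicExtension, Int.emod_eq_of_lt (by omega) (by omega)]
    · obtain ⟨u, rfl⟩ := Nat.exists_eq_add_of_le hst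
      calc w (i + ↑(s + u)) = w (i + u) := by
            rw [hagree u (by omega)]; push_cast; ring_nf
        _ = periodicExtension w i s u := ih u (by omega) (by omega)
        _ = periodicExtension w i s ↑(s + u) := by
            rw [← (periodicExtension_periodic w i s) u]; push_cast; ring_nf

end PeriodicWords

theorem phiaperiodic_of_far_from_periodic_general {A : Type*} (φ : ℕ → ℝ)
    (w : ℤ → A)
    (hw : ∀ s : ℕ, 1 ≤ s → ∀ wbar : ℤ → A, (∀ i : ℤ, wbar i = wbar (i + s)) →
      ∀ i : ℤ,
        (2 : ℝ) ^ (-(((s : ℝ) + (sInf {j : ℕ | (s : ℝ) ≤ φ j} : ℕ) - 1) / 2)) <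
          dbar (fun j => w (j + i)) wbar) :
    ∀ (i : ℤ) (l s : ℕ), 1 ≤ s →
      (∀ j : ℕ, j ≤ l → w (i + j) = w (i + s + j)) → φ l < s := by
  intro i l s hs hagree
  by_contra! hφ
  have hℓ : ((sInf {j : ℕ | (s : ℝ) ≤ φ j} : ℕ) : ℝ) ≤ l := by exact_mod_cast Nat.sInf_le hφ
  set m := (l + s) / 2
  set wbar := fun j => periodicExtension w i s (j + m)
  have hclose : dbar (fun j => w (j + (i + m))) wbar ≤ 2 ^ (-(m : ℝ)) :=
    dbar_le_of_eqOn m fun j hj => by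
      have := abs_le.mp hj
      rw [show j + (i + m) = i + (j + m) by ring]
      exact eq_periodicExtension_of_agree hs hagree (by omega) (by omega)
  have hfar := hw s hs wbar (fun j => ((periodicExtension_periodic w i s).add_const m j).symm)
    (i + m)
  have hexp := (Real.rpow_lt_rpow_left_iff one_lt_two).mp (hfar.trans_le hclose)
  have hm : (l + s : ℝ) ≤ 2 * m + 1 := by exact_mod_cast (by omega : l + s ≤ 2 * m + 1)
  linarith

/-- If `d̄(T^i w, w̄) > 2^{−(s+ℓ(s)−1)/2}` for every periodic word `w̄`
of period `s ≥ 1` and every `i ∈ ℤ`, then `w` is φ-aperiodic. -/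
theorem phiaperiodic_of_far_from_periodic {A : Type*} (φ : ℕ → ℝ) (hmono : Monotone φ)
    (hnonneg : ∀ l : ℕ, 0 ≤ φ l) (hunb : ∀ C : ℝ, ∃ j : ℕ, C < φ j)
    (w : ℤ → A)
    (hw : ∀ s : ℕ, 1 ≤ s → ∀ wbar : ℤ → A, (∀ i : ℤ, wbar i = wbar (i + s)) →
      ∀ i : ℤ,
        (2 : ℝ) ^ (-(((s : ℝ) + (sInf {j : ℕ | (s : ℝ) ≤ φ j} : ℕ) - 1) / 2)) <
          dbar (fun j => w (j + i)) wbar) :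
    ∀ (i : ℤ) (l s : ℕ), 1 ≤ s →
      (∀ j : ℕ, j ≤ l → w (i + j) = w (i + s + j)) → φ l < s :=
  phiaperiodic_of_far_from_periodic_general φ w hw
end

section
/- Let A be an alphabet of k symbols and φ : ℕ → [0,∞) non-decreasing unbounded with right-inverse ℓ. Define W^g(m) ⊆ A^{\{1,…,m\}} to be the set of words w of length m such that for all i, s ≥ 1 and l ∈ ℕ with i + s + l ≤ m, the equality w(i+j) = w(i+s+j) for all 0 ≤ j ≤ l implies s > φ(l). Then |W^g(m+1)| ≥ (k − ⌊φ(0)⌋)|W^g(m)| − Σ_{j=1}^{m} (⌊φ(j)⌋ − ⌊φ(j−1)⌋)|W^g(m−j)|. -/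
/-- A finite word `v` of length `m` is good (φ-aperiodic) if whenever a subword of
length `l+1` starting at position `i` reappears at shift `s ≥ 1` (inside the word),
then `s > φ(l)`. -/
def GoodWord {A : Type*} (φ : ℕ → ℝ) (m : ℕ) (v : Fin m → A) : Prop :=
  ∀ i s l : ℕ, 1 ≤ s → ∀ h : i + s + l < m,
    (∀ j : ℕ, ∀ hj : j ≤ l,
      v ⟨i + j, by omega⟩ = v ⟨i + s + j, by omega⟩) → φ l < s

/-!
Extend each good word of length `m` by one letter in all `k` ways. An extension that is not good
contains a forbidden repetition, at some shift `s`, which must end at the new last letter because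
the prefix is good. Cutting that repetition down to its last `ℓ(s) + 1` letters, the extension is
`s`-periodic from position `m - ℓ(s)` on, hence determined by its prefix of length `m - ℓ(s)`,
which is again good. So the bad extensions number at most `∑ₛ |W^g(m - ℓ(s))|`, and there are at
most `⌊φ 0⌋` shifts with `ℓ(s) = 0` and at most `⌊φ j⌋ - ⌊φ (j - 1)⌋` with `ℓ(s) = j ≥ 1`.
-/

open Finset

section GoodWords

variable {A : Type*} {φ : ℕ → ℝ}

theorem GoodWord.comp_castLE {m n : ℕ} (h : n ≤ m) {v : Fin m → A} (hv : GoodWord φ m v) :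
    GoodWord φ n (v ∘ Fin.castLE h) :=
  fun i s l hs _ heq => hv i s l hs (by omega) heq

def PeriodicFrom {n : ℕ} (w : Fin n → A) (s t : ℕ) : Prop :=
  ∀ p : Fin n, t ≤ p → ∃ q : Fin n, q.val + s = p ∧ w q = w p

theorem PeriodicFrom.injOn_prefix {n s t : ℕ} (hs : 0 < s) (ht : t ≤ n) :
    {w : Fin n → A | PeriodicFrom w s t}.InjOn (· ∘ Fin.castLE ht) := by
  intro w hw w' hw' hprefix
  funext p
  induction p using WellFoundedLT.induction with
  | _ p ih =>
    by_cases hp : p.val < t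
    · exact congrFun hprefix ⟨p, hp⟩
    · obtain ⟨q, hqp, hq⟩ := hw p (by omega)
      obtain ⟨q', hqp', hq'⟩ := hw' p (by omega)
      obtain rfl : q = q' := Fin.ext (by omega)
      rw [← hq, ← hq', ih q (Fin.lt_def.mpr (by omega))]

/-- The paper's `ℓ(s)`. It is the junk value `0` when no such `l` exists, which never matters
below since `ℓ(s)` is only used for shifts `s ≤ φ l`. -/
noncomputable def forbiddenLength (φ : ℕ → ℝ) (s : ℕ) : ℕ := sInf {l | (s : ℝ) ≤ φ l}

theorem forbiddenLength_le {s l : ℕ} (h : (s : ℝ) ≤ φ l) : forbiddenLength φ s ≤ l :=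
  Nat.sInf_le h

theorem le_apply_forbiddenLength {s l : ℕ} (h : (s : ℝ) ≤ φ l) :
    (s : ℝ) ≤ φ (forbiddenLength φ s) :=
  Nat.sInf_mem (s := {l | (s : ℝ) ≤ φ l}) ⟨l, h⟩

theorem apply_lt_of_lt_forbiddenLength {s l : ℕ} (h : l < forbiddenLength φ s) : φ l < s :=
  not_le.mp (Nat.notMem_of_lt_sInf h)

noncomputable def shiftsOfLength (φ : ℕ → ℝ) (j : ℕ) : Finset ℕ :=
  {s ∈ Icc 1 ⌊φ j⌋₊ | forbiddenLength φ s = j}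

theorem card_shiftsOfLength_zero_le : #(shiftsOfLength φ 0) ≤ ⌊φ 0⌋₊ :=
  (card_filter_le _ _).trans (by simp)

theorem card_shiftsOfLength_le {j : ℕ} (hj : 0 < j) :
    #(shiftsOfLength φ j) ≤ ⌊φ j⌋₊ - ⌊φ (j - 1)⌋₊ := by
  have hsub : shiftsOfLength φ j ⊆ Ioc ⌊φ (j - 1)⌋₊ ⌊φ j⌋₊ := by
    intro s hs
    simp only [shiftsOfLength, mem_filter, mem_Icc] at hs
    obtain ⟨⟨hs1, hsj⟩, hℓ⟩ := hs
    have hlt : φ (j - 1) < s := apply_lt_of_lt_forbiddenLength (by omega)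
    exact mem_Ioc.mpr ⟨(Nat.floor_lt' (by omega)).mpr hlt, hsj⟩
  simpa using card_le_card hsub

theorem exists_periodicFrom_of_not_goodWord_succ {m : ℕ} {w : Fin (m + 1) → A}
    (hinit : GoodWord φ m (Fin.init w)) (hw : ¬ GoodWord φ (m + 1) w) :
    ∃ j ≤ m, ∃ s ∈ shiftsOfLength φ j, PeriodicFrom w s (m - j) := by
  simp only [GoodWord, not_forall, not_lt] at hw
  obtain ⟨i, s, l, hs, hlt, heq, hsl⟩ := hw
  have hend : i + s + l = m := by
    by_contra hne
    exact (hinit i s l hs (by omega) heq).not_ge hsl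
  have hℓ := forbiddenLength_le hsl
  refine ⟨forbiddenLength φ s, by omega, s, ?_,
    fun p hp => ⟨⟨p - s, by omega⟩, Nat.sub_add_cancel (by omega), ?_⟩⟩
  · simp only [shiftsOfLength, mem_filter, mem_Icc, and_true]
    exact ⟨hs, Nat.le_floor (le_apply_forbiddenLength hsl)⟩
  · convert heq (p - (i + s)) (by omega) using 2 <;> ext <;> simp <;> omega

section Counting

variable (A) [Fintype A]

open Classical in
noncomputable def goodWords (φ : ℕ → ℝ) (n : ℕ) : Finset (Fin n → A) := {v | GoodWord φ n v}

theorem natCard_subtype_goodWord (n : ℕ) :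
    Nat.card {v : Fin n → A // GoodWord φ n v} = #(goodWords A φ n) := by
  classical
  rw [Nat.card_eq_fintype_card, Fintype.card_subtype, goodWords]

open Classical in
theorem card_filter_goodWord_init (m : ℕ) :
    #{w : Fin (m + 1) → A | GoodWord φ m (Fin.init w)} = #(goodWords A φ m) * Fintype.card A := by
  rw [card_equiv (Fin.snocEquiv fun _ => A).symm (t := univ ×ˢ goodWords A φ m)
    (by simp [goodWords]), card_product, card_univ, mul_comm]

theorem card_goodWords_mul_le (m : ℕ) :
    #(goodWords A φ m) * Fintype.card A ≤ #(goodWords A φ (m + 1)) +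
      ∑ j ∈ Icc 0 m, #(shiftsOfLength φ j) * #(goodWords A φ (m - j)) := by
  classical
  set extensions : Finset (Fin (m + 1) → A) := {w | GoodWord φ m (Fin.init w)}
  set periodic := fun j s => {w ∈ extensions | PeriodicFrom w s (m - j)}
  have hsub : extensions ⊆ goodWords A φ (m + 1) ∪
      (Icc 0 m).biUnion fun j => (shiftsOfLength φ j).biUnion (periodic j) := by
    intro w hw
    by_cases hgood : GoodWord φ (m + 1) w
    · simp [goodWords, hgood]
    · obtain ⟨j, hj, s, hs, hper⟩ :=
        exists_periodicFrom_of_not_goodWord_succ (mem_filter.mp hw).2 hgood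
      refine mem_union_right _ (mem_biUnion.mpr ⟨j, by simpa using hj, ?_⟩)
      exact mem_biUnion.mpr ⟨s, hs, mem_filter.mpr ⟨hw, hper⟩⟩
  have hperiodic (j s : ℕ) (hs : s ∈ shiftsOfLength φ j) :
      #(periodic j s) ≤ #(goodWords A φ (m - j)) := by
    have hs : 0 < s := by simp [shiftsOfLength] at hs; omega
    refine card_le_card_of_injOn (· ∘ Fin.castLE (by omega : m - j ≤ m + 1)) ?_ ?_
    · intro w hw
      simp only [periodic, extensions, coe_filter, mem_filter, mem_univ, true_and] at hw
      simp only [goodWords, coe_filter, mem_univ, true_and, Set.mem_ofPred_eq]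
      exact hw.1.comp_castLE (by omega : m - j ≤ m)
    · exact (PeriodicFrom.injOn_prefix hs _).mono fun w hw => (mem_filter.mp hw).2
  calc #(goodWords A φ m) * Fintype.card A = #extensions := (card_filter_goodWord_init A m).symm
    _ ≤ #(goodWords A φ (m + 1)) +
          #((Icc 0 m).biUnion fun j => (shiftsOfLength φ j).biUnion (periodic j)) :=
      (card_le_card hsub).trans (card_union_le _ _)
    _ ≤ #(goodWords A φ (m + 1)) + ∑ j ∈ Icc 0 m, ∑ s ∈ shiftsOfLength φ j, #(periodic j s) := by
      gcongr
      exact card_biUnion_le.trans (sum_le_sum fun j _ => card_biUnion_le)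
    _ ≤ _ := by
      gcongr with j
      simpa using sum_le_sum (hperiodic j)

end Counting

end GoodWords

theorem good_words_count_ineq_general {A : Type*} [Fintype A] (k : ℕ) (hk : Fintype.card A = k)
    (φ : ℕ → ℝ) (hmono : Monotone φ) (hnonneg : ∀ l : ℕ, 0 ≤ φ l) (m : ℕ) :
    ((k : ℤ) - ⌊φ 0⌋) * (Nat.card {v : Fin m → A // GoodWord φ m v} : ℤ)
      - ∑ j ∈ Finset.Icc 1 m, (⌊φ j⌋ - ⌊φ (j - 1)⌋) *
          (Nat.card {v : Fin (m - j) → A // GoodWord φ (m - j) v} : ℤ)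
      ≤ (Nat.card {v : Fin (m + 1) → A // GoodWord φ (m + 1) v} : ℤ) := by
  have hfloor (j : ℕ) : (⌊φ j⌋₊ : ℤ) = ⌊φ j⌋ := Int.natCast_floor_eq_floor (hnonneg j)
  have hshifts0 : (#(shiftsOfLength φ 0) : ℤ) ≤ ⌊φ 0⌋ := by
    rw [← hfloor]
    exact_mod_cast card_shiftsOfLength_zero_le
  have hshifts (j : ℕ) (hj : j ∈ Icc 1 m) :
      (#(shiftsOfLength φ j) : ℤ) ≤ ⌊φ j⌋ - ⌊φ (j - 1)⌋ := by
    rw [← hfloor, ← hfloor, ← Nat.cast_sub (Nat.floor_mono (hmono (Nat.sub_le j 1)))]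
    exact_mod_cast card_shiftsOfLength_le (mem_Icc.mp hj).1
  have hcount := card_goodWords_mul_le A (φ := φ) m
  rw [← insert_Icc_add_one_left_eq_Icc (Nat.zero_le m), sum_insert (by simp), hk] at hcount
  have hsum := sum_le_sum fun j hj =>
    mul_le_mul_of_nonneg_right (hshifts j hj) (Int.natCast_nonneg #(goodWords A φ (m - j)))
  have h0 := mul_le_mul_of_nonneg_right hshifts0 (Int.natCast_nonneg #(goodWords A φ m))
  simp only [natCard_subtype_goodWord]
  push_cast [zero_add, Nat.sub_zero] at hcount hsum h0 ⊢
  linarith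

/-- The counting inequality for the number of good words:
`|W^g(m+1)| ≥ (k − ⌊φ(0)⌋)|W^g(m)| − Σ_{j=1}^m (⌊φ(j)⌋ − ⌊φ(j−1)⌋)|W^g(m−j)|`. -/
theorem good_words_count_ineq {A : Type*} [Fintype A] (k : ℕ) (hk : Fintype.card A = k)
    (φ : ℕ → ℝ) (hmono : Monotone φ) (hnonneg : ∀ l : ℕ, 0 ≤ φ l)
    (hunb : ∀ C : ℝ, ∃ j : ℕ, C < φ j) (m : ℕ) :
    ((k : ℤ) - ⌊φ 0⌋) * (Nat.card {v : Fin m → A // GoodWord φ m v} : ℤ)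
      - ∑ j ∈ Finset.Icc 1 m, (⌊φ j⌋ - ⌊φ (j - 1)⌋) *
          (Nat.card {v : Fin (m - j) → A // GoodWord φ (m - j) v} : ℤ)
      ≤ (Nat.card {v : Fin (m + 1) → A // GoodWord φ (m + 1) v} : ℤ) :=
  good_words_count_ineq_general k hk φ hmono hnonneg m
end

section
/- Let k ≥ 2, 0 < δ < 1, and k^δ < c < k. Then there exists l₀ ∈ ℕ such that the function φ defined by φ(l) = 0 for l ≤ l₀ and φ(l) = k^{δl} for l > l₀ satisfies k − ⌊φ(0)⌋ − Σ_{l=1}^{∞} (⌊φ(l)⌋ − ⌊φ(l−1)⌋)/c^l ≥ c. -/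
/-!
Write `a = k^δ ≥ 1` and `r = a / c < 1`. Since `φ` is nondecreasing, the terms of the series are
nonnegative; the `l`-th term of the series vanishes for `l < l₀`, and
for `l ≥ l₀` it is at most `⌊a^(l+1)⌋ / c^(l+1) ≤ r^(l+1)`, because `⌊φ l⌋ ≥ 0`. Hence the series
is at most the geometric tail `r^(l₀+1) / (1 - r)`, which is below `k - c` once `l₀` is large.
-/

open Real

theorem tsum_le_of_eq_zero_of_le_geometric {f : ℕ → ℝ} {n : ℕ} {C r : ℝ}
    (hf : ∀ l, 0 ≤ f l) (hzero : ∀ l < n, f l = 0) (htail : ∀ l, f (l + n) ≤ C * r ^ l)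
    (hr0 : 0 ≤ r) (hr1 : r < 1) :
    ∑' l, f l ≤ C / (1 - r) := by
  have hgeom : Summable fun l => C * r ^ l := (summable_geometric_of_lt_one hr0 hr1).mul_left C
  have hshift : Summable fun l => f (l + n) := .of_nonneg_of_le (fun l => hf _) htail hgeom
  rw [← ((summable_nat_add_iff n).1 hshift).sum_add_tsum_nat_add n,
    Finset.sum_eq_zero fun l hl => hzero l (Finset.mem_range.1 hl), zero_add]
  calc ∑' l, f (l + n) ≤ ∑' l, C * r ^ l := hshift.tsum_le_tsum htail hgeom
    _ = C / (1 - r) := by rw [tsum_mul_left, tsum_geometric_of_lt_one hr0 hr1, div_eq_mul_inv]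

section TruncatedPowers

variable {u : ℕ → ℝ} {a : ℝ} {n : ℕ}

theorem nonneg_of_eq_zero_of_eq_pow (ha : 0 ≤ a) (hzero : ∀ l ≤ n, u l = 0)
    (hpow : ∀ l, n < l → u l = a ^ l) (l : ℕ) : 0 ≤ u l := by
  rcases le_or_gt l n with hl | hl
  · rw [hzero l hl]
  · rw [hpow l hl]; positivity

theorem le_succ_of_eq_zero_of_eq_pow (ha : 1 ≤ a) (hzero : ∀ l ≤ n, u l = 0)
    (hpow : ∀ l, n < l → u l = a ^ l) (l : ℕ) : u l ≤ u (l + 1) := by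
  rcases le_or_gt (l + 1) n with hl | hl
  · rw [hzero l (by omega), hzero (l + 1) hl]
  rw [hpow (l + 1) hl]
  rcases le_or_gt l n with hl' | hl'
  · rw [hzero l hl']; positivity
  · rw [hpow l hl']; exact pow_le_pow_right₀ ha l.le_succ

theorem tsum_floor_sub_floor_div_pow_le {c : ℝ} (ha : 1 ≤ a) (hac : a < c)
    (hzero : ∀ l ≤ n, u l = 0) (hpow : ∀ l, n < l → u l = a ^ l) :
    ∑' l, ((⌊u (l + 1)⌋ : ℝ) - ⌊u l⌋) / c ^ (l + 1) ≤ (a / c) ^ (n + 1) / (1 - a / c) := by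
  have hc : 0 < c := by linarith
  have hu := nonneg_of_eq_zero_of_eq_pow (zero_le_one.trans ha) hzero hpow
  refine tsum_le_of_eq_zero_of_le_geometric (n := n) (fun l => ?_) (fun l hl => ?_) (fun l => ?_)
    (by positivity) ((div_lt_one hc).2 hac)
  · have hfloor : ⌊u l⌋ ≤ ⌊u (l + 1)⌋ :=
      Int.floor_le_floor (le_succ_of_eq_zero_of_eq_pow ha hzero hpow l)
    have : (0 : ℝ) ≤ ⌊u (l + 1)⌋ - ⌊u l⌋ := sub_nonneg.2 (by exact_mod_cast hfloor)
    positivity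
  · rw [hzero l hl.le, hzero (l + 1) hl, sub_self, zero_div]
  · have hfloor : (0 : ℝ) ≤ ⌊u (l + n)⌋ := by exact_mod_cast Int.floor_nonneg.2 (hu _)
    have hnum : (⌊u (l + n + 1)⌋ : ℝ) - ⌊u (l + n)⌋ ≤ a ^ (l + n + 1) := by
      linarith [Int.floor_le (u (l + n + 1)), hpow (l + n + 1) (by omega)]
    calc ((⌊u (l + n + 1)⌋ : ℝ) - ⌊u (l + n)⌋) / c ^ (l + n + 1)
        ≤ a ^ (l + n + 1) / c ^ (l + n + 1) := by gcongr
      _ = (a / c) ^ (n + 1) * (a / c) ^ l := by rw [← div_pow, ← pow_add]; ring_nf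

end TruncatedPowers

theorem summability_criterion_satisfied_general (k : ℕ)
    (δ : ℝ) (hδ0 : 0 < δ)
    (c : ℝ) (hc1 : (k : ℝ) ^ δ < c) (hc2 : c < k) :
    ∃ l₀ : ℕ, ∀ φ : ℕ → ℝ,
      (∀ l : ℕ, l ≤ l₀ → φ l = 0) →
      (∀ l : ℕ, l₀ < l → φ l = (k : ℝ) ^ (δ * l)) →
      c ≤ (k : ℝ) - (⌊φ 0⌋ : ℝ) -
        ∑' l : ℕ, ((⌊φ (l + 1)⌋ : ℝ) - (⌊φ l⌋ : ℝ)) / c ^ (l + 1) := by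
  have hk : (0 : ℝ) < k := (rpow_nonneg k.cast_nonneg δ).trans_lt (hc1.trans hc2)
  have ha : 1 ≤ (k : ℝ) ^ δ := one_le_rpow (Nat.one_le_cast.2 (Nat.cast_pos.1 hk)) hδ0.le
  set r := (k : ℝ) ^ δ / c
  have hr0 : 0 ≤ r := div_nonneg (zero_le_one.trans ha) (by linarith)
  have hr1 : r < 1 := (div_lt_one (by linarith)).2 hc1
  obtain ⟨n, hn⟩ := exists_pow_lt_of_lt_one (mul_pos (sub_pos.2 hc2) (sub_pos.2 hr1)) hr1
  refine ⟨n, fun φ hzero hpow => ?_⟩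
  have hsum := tsum_floor_sub_floor_div_pow_le ha hc1 hzero fun l hl => by
    rw [hpow l hl, rpow_mul_natCast hk.le]
  have htail : r ^ (n + 1) / (1 - r) ≤ k - c := by
    rw [div_le_iff₀ (sub_pos.2 hr1)]
    exact (pow_le_pow_of_le_one hr0 hr1.le n.le_succ).trans hn.le
  rw [hzero 0 n.zero_le, Int.floor_zero, Int.cast_zero, sub_zero]
  linarith

/-- For `k ≥ 2`, `0 < δ < 1` and `k^δ < c < k`, there exists `l₀` such
that the function `φ(l) = 0` for `l ≤ l₀` and `φ(l) = k^{δl}` for `l > l₀` satisfies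
`k − ⌊φ(0)⌋ − Σ_{l≥1} (⌊φ(l)⌋ − ⌊φ(l−1)⌋)/c^l ≥ c`. -/
theorem summability_criterion_satisfied (k : ℕ) (hk : 2 ≤ k)
    (δ : ℝ) (hδ0 : 0 < δ) (hδ1 : δ < 1)
    (c : ℝ) (hc1 : (k : ℝ) ^ δ < c) (hc2 : c < k) :
    ∃ l₀ : ℕ, ∀ φ : ℕ → ℝ,
      (∀ l : ℕ, l ≤ l₀ → φ l = 0) →
      (∀ l : ℕ, l₀ < l → φ l = (k : ℝ) ^ (δ * l)) →
      c ≤ (k : ℝ) - (⌊φ 0⌋ : ℝ) -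
        ∑' l : ℕ, ((⌊φ (l + 1)⌋ : ℝ) - (⌊φ l⌋ : ℝ)) / c ^ (l + 1) :=
  summability_criterion_satisfied_general k δ hδ0 c hc1 hc2
end

section
/- Let φ : ℕ → [0,∞) be non-decreasing with limsup_{l→∞} (1/l)·ln(φ(l)) ≤ δ·ln(k) for some 0 < δ < 1, where k ≥ 2 is the alphabet size. Then there exist l₀ ∈ ℕ and a biinfinite word w ∈ A^ℤ such that R_w(l) ≥ φ(l) for every l ≥ l₀, where R_w(l) = min over i ∈ ℤ of min{s ≥ 1 : w(i+s+j) = w(i+j) for all 0 ≤ j ≤ l}. -/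
/-!
Call a word `N`-aperiodic if no factor of length `l + 1` reappears after a shift `s ≤ N l`.
Let `V n` be the set of `N`-aperiodic words of length `n`. Prepending a letter to a word of `V n`
gives either a word of `V (n + 1)` or a word with a repetition of some period `s ≤ N l` on its
first `s + l + 1` letters; such a word is determined by its suffix after position `l`, which lies
in `V (n - l)`. Hence `k |V n| ≤ |V (n + 1)| + ∑ N l |V (n - l)|`, and if
`∑ N l / c ^ l ≤ k - c` this recursion forces `|V (n + 1)| ≥ c |V n|`, so `V n ≠ ∅` for all `n`.
Compactness of `A ^ ℤ` turns long finite aperiodic words into a biinfinite one. Taking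
`N l = ⌊k ^ (θ l)⌋` for large `l` with `δ < θ < 1`, the criterion holds for some `c ∈ (k ^ θ, k)`,
and the growth hypothesis gives `φ l ≤ k ^ (θ l) < N l + 1 ≤ R_w(l)` eventually.
-/

open Finset

theorem mul_le_succ_of_le_add_sum {a b : ℕ → ℝ} {k c : ℝ} (hc : 0 < c) (ha : ∀ n, 0 ≤ a n)
    (hb : ∀ n, 0 ≤ b n) (hrec : ∀ n, k * a n ≤ a (n + 1) + ∑ l ∈ range n, b l * a (n - l))
    (hcrit : ∀ n, ∑ l ∈ range n, b l / c ^ l ≤ k - c) (n : ℕ) : c * a n ≤ a (n + 1) := by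
  induction n using Nat.strong_induction_on with
  | _ n ih =>
  have hpow : ∀ l ≤ n, c ^ l * a (n - l) ≤ a n := by
    intro l hl
    induction l with
    | zero => simp
    | succ l ihl =>
      calc c ^ (l + 1) * a (n - (l + 1)) = c ^ l * (c * a (n - (l + 1))) := by ring
        _ ≤ c ^ l * a (n - (l + 1) + 1) := by gcongr; exact ih _ (by omega)
        _ = c ^ l * a (n - l) := by rw [show n - (l + 1) + 1 = n - l by omega]
        _ ≤ a n := ihl (by omega)
  have hsum : ∑ l ∈ range n, b l * a (n - l) ≤ (k - c) * a n := calc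
    _ ≤ ∑ l ∈ range n, b l / c ^ l * a n := sum_le_sum fun l hl => by
        rw [div_mul_eq_mul_div, le_div_iff₀ (by positivity), mul_assoc]
        exact mul_le_mul_of_nonneg_left (by linarith [hpow l (mem_range.1 hl).le]) (hb l)
    _ = (∑ l ∈ range n, b l / c ^ l) * a n := (sum_mul ..).symm
    _ ≤ (k - c) * a n := mul_le_mul_of_nonneg_right (hcrit n) (ha n)
  linarith [hrec n]

theorem sum_range_ite_pow_div_pow_le {x c : ℝ} (hx : 0 ≤ x) (hxc : x < c) (l₀ n : ℕ) :
    ∑ l ∈ range n, (if l₀ ≤ l then x ^ l else 0) / c ^ l ≤ (x / c) ^ l₀ / (1 - x / c) := by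
  have hc : 0 < c := hx.trans_lt hxc
  calc ∑ l ∈ range n, (if l₀ ≤ l then x ^ l else 0) / c ^ l
      = ∑ l ∈ Ico l₀ n, (x / c) ^ l := by
        rw [show Ico l₀ n = {l ∈ range n | l₀ ≤ l} by ext; simp; omega, sum_filter]
        exact sum_congr rfl fun l _ => by split_ifs <;> simp [div_pow]
    _ ≤ (x / c) ^ l₀ / (1 - x / c) :=
      geom_sum_Ico_le_of_lt_one (by positivity) ((div_lt_one hc).2 hxc)

open Filter in
theorem eventually_le_rpow_of_log_div_le {φ : ℕ → ℝ} {k δ θ : ℝ} (hk : 1 < k) (hδθ : δ < θ)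
    (hlim : ∀ ε : ℝ, 0 < ε → ∀ᶠ l : ℕ in atTop, Real.log (φ l) / l ≤ δ * Real.log k + ε) :
    ∀ᶠ l : ℕ in atTop, φ l ≤ k ^ (θ * l) := by
  filter_upwards [hlim _ (mul_pos (sub_pos.2 hδθ) (Real.log_pos hk)), eventually_gt_atTop 0]
    with l hl hl0
  rcases le_or_gt (φ l) 0 with hφ | hφ
  · exact hφ.trans (by positivity)
  rw [← Real.log_le_log_iff hφ (by positivity), Real.log_rpow (by linarith)]
  rw [div_le_iff₀ (by exact_mod_cast hl0)] at hl
  linarith [show (δ * Real.log k + (θ - δ) * Real.log k) * l = θ * l * Real.log k by ring]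

namespace RecurrenceTime

variable {A : Type*}

def RepeatsAt (u : List A) (i s l : ℕ) : Prop :=
  i + s + l < u.length ∧ ∀ j ≤ l, u[i + s + j]? = u[i + j]?

def Aperiodic (N : ℕ → ℕ) (u : List A) : Prop :=
  ∀ i s l, 0 < s → RepeatsAt u i s l → N l < s

variable {N : ℕ → ℕ} {u : List A} {i s l : ℕ}

theorem RepeatsAt.of_drop {m : ℕ} (h : RepeatsAt (u.drop m) i s l) : RepeatsAt u (m + i) s l := by
  obtain ⟨hlen, hmatch⟩ := h
  refine ⟨by rw [List.length_drop] at hlen; omega, fun j hj => ?_⟩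
  simpa [List.getElem?_drop, Nat.add_assoc] using hmatch j hj

theorem Aperiodic.drop (hu : Aperiodic N u) (m : ℕ) : Aperiodic N (u.drop m) :=
  fun _ _ _ hs h => hu _ _ _ hs h.of_drop

theorem RepeatsAt.of_cons {a : A} (h : RepeatsAt (a :: u) (i + 1) s l) : RepeatsAt u i s l := by
  obtain ⟨hlen, hmatch⟩ := h
  refine ⟨by rw [List.length_cons] at hlen; omega, fun j hj => ?_⟩
  simpa [Nat.add_right_comm _ 1] using hmatch j hj

theorem Aperiodic.exists_repeatsAt_zero_of_cons {a : A} (hu : Aperiodic N u)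
    (hau : ¬ Aperiodic N (a :: u)) : ∃ s l, 0 < s ∧ s ≤ N l ∧ RepeatsAt (a :: u) 0 s l := by
  simp only [Aperiodic, not_forall, not_lt] at hau
  obtain ⟨i, s, l, hs, hrep, hsN⟩ := hau
  cases i with
  | zero => exact ⟨s, l, hs, hsN, hrep⟩
  | succ i => exact absurd (hu i s l hs hrep.of_cons) (not_lt.2 hsN)

theorem RepeatsAt.eq_of_drop_eq {v : List A} (hs : 0 < s) (hu : RepeatsAt u 0 s l)
    (hv : RepeatsAt v 0 s l) (hlen : u.length = v.length)
    (hdrop : u.drop (l + 1) = v.drop (l + 1)) :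
    u = v := by
  -- downward induction on the position: a position `m ≤ l` carries the letter at `m + s`
  suffices h : ∀ d m, u.length ≤ m + d → u[m]? = v[m]? from
    List.ext_getElem? fun m => h u.length m (by omega)
  intro d
  induction d with
  | zero =>
    intro m hm
    rw [List.getElem?_eq_none (by omega), List.getElem?_eq_none (by omega)]
  | succ d ih =>
    intro m hm
    rcases le_or_gt m l with hml | hml
    · have hu' := hu.2 m hml
      have hv' := hv.2 m hml
      simp only [zero_add] at hu' hv'
      rw [← hu', ← hv']
      exact ih _ (by omega)
    · have := congrArg (·[m - (l + 1)]?) hdrop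
      simpa [List.getElem?_drop, Nat.add_sub_cancel' hml] using this

variable (A) in
noncomputable def aperiodicWords [Finite A] (N : ℕ → ℕ) (n : ℕ) : Finset (List A) :=
  ((List.finite_length_eq A n).inter_of_left {u | Aperiodic N u}).toFinset

@[simp]
theorem mem_aperiodicWords [Finite A] {n : ℕ} :
    u ∈ aperiodicWords A N n ↔ u.length = n ∧ Aperiodic N u := by
  simp [aperiodicWords]

theorem card_aperiodicWords_zero [Finite A] : #(aperiodicWords A N 0) = 1 := by
  rw [card_eq_one]
  refine ⟨[], eq_singleton_iff_unique_mem.2 ⟨?_, fun u hu => ?_⟩⟩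
  · exact mem_aperiodicWords.2 ⟨rfl, fun i s l _ h => absurd h.1 (by simp)⟩
  · exact List.eq_nil_of_length_eq_zero (mem_aperiodicWords.1 hu).1

section Counting

variable [Fintype A]

open Classical in
theorem card_cons_aperiodic_le (n : ℕ) :
    #({p ∈ univ ×ˢ aperiodicWords A N n | Aperiodic N (p.1 :: p.2)}) ≤
      #(aperiodicWords A N (n + 1)) := by
  refine card_le_card_of_injOn (fun p => p.1 :: p.2) (fun p hp => ?_) ?_
  · simp only [coe_filter, mem_product, mem_univ, true_and, mem_aperiodicWords,
      Set.mem_ofPred_eq] at hp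
    simp [hp.1.1, hp.2]
  · intro p _ q _ h
    exact Prod.ext (List.cons.inj h).1 (List.cons.inj h).2

open Classical in
theorem card_cons_repeatsAt_le (n : ℕ) (hs : 0 < s) :
    #({p ∈ univ ×ˢ aperiodicWords A N n | RepeatsAt (p.1 :: p.2) 0 s l}) ≤
      #(aperiodicWords A N (n - l)) := by
  refine card_le_card_of_injOn (fun p => p.2.drop l) (fun p hp => ?_) ?_
  · simp only [coe_filter, mem_product, mem_univ, true_and, mem_aperiodicWords,
      Set.mem_ofPred_eq] at hp
    simp [hp.1.1, hp.1.2.drop l]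
  · intro p hp q hq h
    simp only [coe_filter, mem_product, mem_univ, true_and, mem_aperiodicWords,
      Set.mem_ofPred_eq] at hp hq
    have := hp.2.eq_of_drop_eq hs hq.2 (by simp [hp.1.1, hq.1.1]) (by simpa using h)
    exact Prod.ext (List.cons.inj this).1 (List.cons.inj this).2

theorem card_mul_card_aperiodicWords_le (n : ℕ) :
    Fintype.card A * #(aperiodicWords A N n) ≤
      #(aperiodicWords A N (n + 1)) + ∑ l ∈ range n, N l * #(aperiodicWords A N (n - l)) := by
  classical
  set P := (univ : Finset A) ×ˢ aperiodicWords A N n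
  have hcover : P ⊆ {p ∈ P | Aperiodic N (p.1 :: p.2)} ∪ (range n).biUnion fun l =>
      (Icc 1 (N l)).biUnion fun s => {p ∈ P | RepeatsAt (p.1 :: p.2) 0 s l} := by
    rintro ⟨a, t⟩ hp
    by_cases hat : Aperiodic N (a :: t)
    · exact mem_union_left _ (mem_filter.2 ⟨hp, hat⟩)
    obtain ⟨ht, ht'⟩ : t.length = n ∧ Aperiodic N t := by simpa [P] using hp
    obtain ⟨s, l, hs, hsN, hrep⟩ := ht'.exists_repeatsAt_zero_of_cons hat
    have hl : l < n := by have := hrep.1; simp only [zero_add, List.length_cons] at this; omega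
    simp only [mem_union, mem_biUnion, mem_range, mem_Icc, mem_filter]
    exact Or.inr ⟨l, hl, s, ⟨hs, hsN⟩, hp, hrep⟩
  calc Fintype.card A * #(aperiodicWords A N n) = #P := by simp [P]
    _ ≤ _ := (card_le_card hcover).trans (card_union_le _ _)
    _ ≤ _ := by
      refine add_le_add (card_cons_aperiodic_le n)
        (card_biUnion_le.trans (sum_le_sum fun l _ => ?_))
      refine (card_biUnion_le_card_mul _ _ _ fun s hs => card_cons_repeatsAt_le n ?_).trans ?_
      · exact (mem_Icc.1 hs).1
      · simp

theorem pow_le_card_aperiodicWords {c : ℝ} (hc : 0 < c)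
    (hcrit : ∀ n, ∑ l ∈ range n, (N l : ℝ) / c ^ l ≤ Fintype.card A - c) (n : ℕ) :
    c ^ n ≤ #(aperiodicWords A N n) := by
  have hstep := mul_le_succ_of_le_add_sum hc (fun n => Nat.cast_nonneg _)
    (fun l => Nat.cast_nonneg _)
    (fun n => by exact_mod_cast card_mul_card_aperiodicWords_le (N := N) n) hcrit
  induction n with
  | zero => simp [card_aperiodicWords_zero]
  | succ n ih => rw [pow_succ']; exact (mul_le_mul_of_nonneg_left ih hc.le).trans (hstep n)

end Counting

theorem Aperiodic.lt_of_centered_repeats (hu : Aperiodic N u) (a₀ : A) {m : ℕ}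
    (hlen : u.length = 2 * m + 1) {i : ℤ} (hi : -m ≤ i) (him : i + s + l ≤ m) (hs : 0 < s)
    (h : ∀ j ≤ l, u[(i + s + j + m).toNat]?.getD a₀ = u[(i + j + m).toNat]?.getD a₀) :
    N l < s := by
  refine hu (i + m).toNat s l hs ⟨by omega, fun j hj => ?_⟩
  have hj' := h j hj
  rw [show (i + s + j + m).toNat = (i + m).toNat + s + j by omega,
    show (i + j + m).toNat = (i + m).toNat + j by omega] at hj'
  rw [List.getElem?_eq_getElem (by omega), List.getElem?_eq_getElem (by omega)] at hj' ⊢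
  simpa using hj'

def BiAperiodic (N : ℕ → ℕ) (w : ℤ → A) : Prop :=
  ∀ (i : ℤ) (s l : ℕ), 0 < s → (∀ j ≤ l, w (i + s + j) = w (i + j)) → N l < s

open Topology in
theorem exists_biAperiodic [Finite A] [Nonempty A]
    (h : ∀ n, ∃ u : List A, u.length = n ∧ Aperiodic N u) : ∃ w : ℤ → A, BiAperiodic N w := by
  let _ : TopologicalSpace A := ⊥
  have : DiscreteTopology A := ⟨rfl⟩
  choose u hlen hu using fun m => h (2 * m + 1)
  let a₀ : A := Classical.arbitrary A
  let f : ℕ → ℤ → A := fun m z => (u m)[(z + m).toNat]?.getD a₀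
  obtain ⟨w, hw⟩ := exists_clusterPt_of_compactSpace (Filter.map f Filter.atTop)
  refine ⟨w, fun i s l hs hrep => ?_⟩
  have hnhds : (Set.Icc i (i + s + l)).pi (fun z => {w z}) ∈ 𝓝 w :=
    (isOpen_set_pi (Set.finite_Icc _ _) fun z _ => isOpen_discrete {w z}).mem_nhds (by simp)
  obtain ⟨m, hfm, hm⟩ := ((mapClusterPt_iff_frequently.1 hw _ hnhds).and_eventually
    (Filter.eventually_ge_atTop (i.natAbs + s + l))).exists
  have hfw : ∀ z ∈ Set.Icc i (i + s + l), f m z = w z := fun z hz => hfm z hz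
  refine (hu m).lt_of_centered_repeats a₀ (m := m) (i := i) (hlen m) (by omega) (by omega) hs
    fun j hj => ?_
  calc f m (i + s + j) = w (i + s + j) := hfw _ ⟨by omega, by omega⟩
    _ = w (i + j) := hrep j hj
    _ = f m (i + j) := (hfw _ ⟨by omega, by omega⟩).symm

-- `sInf (returnTimes w l)` is the recurrence time `R_w(l)`.
def returnTimes (w : ℤ → A) (l : ℕ) : Set ℕ :=
  {s : ℕ | 1 ≤ s ∧ ∃ i : ℤ, ∀ j : ℕ, j ≤ l → w (i + s + j) = w (i + j)}

theorem returnTimes_nonempty [Finite A] (w : ℤ → A) (l : ℕ) : (returnTimes w l).Nonempty := by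
  obtain ⟨m, m', hne, heq⟩ :=
    Finite.exists_ne_map_eq_of_infinite fun (m : ℕ) (j : Fin (l + 1)) => w (m + j)
  wlog hlt : m < m' generalizing m m'
  · exact this m' m hne.symm heq.symm (by omega)
  refine ⟨m' - m, by omega, m, fun j hj => ?_⟩
  have hj' := congrFun heq ⟨j, by omega⟩
  simp only at hj'
  rw [hj']
  push_cast [hlt.le]
  ring_nf

theorem BiAperiodic.lt_sInf_returnTimes [Finite A] {w : ℤ → A} (hw : BiAperiodic N w) (l : ℕ) :
    N l < sInf (returnTimes w l) :=
  have ⟨hs, i, hi⟩ := Nat.sInf_mem (returnTimes_nonempty w l)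
  hw i _ l hs hi

theorem exists_biAperiodic_of_sum_div_pow_le [Fintype A] {c : ℝ} (hc : 0 < c)
    (hcrit : ∀ n, ∑ l ∈ range n, (N l : ℝ) / c ^ l ≤ Fintype.card A - c) :
    ∃ w : ℤ → A, BiAperiodic N w := by
  have : Nonempty A :=
    Fintype.card_pos_iff.1 <| Nat.cast_pos.1 <| hc.trans_le <| by simpa using hcrit 0
  refine exists_biAperiodic fun n => ?_
  have hpos : 0 < #(aperiodicWords A N n) := by
    exact_mod_cast (pow_pos hc n).trans_le (pow_le_card_aperiodicWords hc hcrit n)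
  obtain ⟨u, hu⟩ := card_pos.1 hpos
  exact ⟨u, mem_aperiodicWords.1 hu⟩

theorem exists_rpow_lt_sInf_returnTimes [Fintype A] {θ : ℝ} (hθ : θ < 1)
    (hA : 1 < Fintype.card A) :
    ∃ l₀ : ℕ, ∃ w : ℤ → A, ∀ l ≥ l₀, (Fintype.card A : ℝ) ^ (θ * l) < sInf (returnTimes w l) := by
  set k : ℝ := (Fintype.card A : ℝ)
  have hk : 1 < k := Nat.one_lt_cast.2 hA
  set x := k ^ θ
  have hx : 0 ≤ x := by positivity
  have hxk : x < k := by simpa using Real.rpow_lt_rpow_of_exponent_lt hk hθ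
  obtain ⟨c, hxc, hck⟩ := exists_between hxk
  have hc : 0 < c := hx.trans_lt hxc
  have hρ : x / c < 1 := (div_lt_one hc).2 hxc
  obtain ⟨l₀, hl₀⟩ := exists_pow_lt_of_lt_one (mul_pos (sub_pos.2 hck) (sub_pos.2 hρ)) hρ
  let N l := if l₀ ≤ l then ⌊k ^ (θ * l)⌋₊ else 0
  have hcrit : ∀ n, ∑ l ∈ range n, (N l : ℝ) / c ^ l ≤ k - c := fun n => calc
    _ ≤ ∑ l ∈ range n, (if l₀ ≤ l then x ^ l else 0) / c ^ l := sum_le_sum fun l _ => by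
        gcongr
        simp only [N]
        split_ifs
        · rw [← Real.rpow_natCast, ← Real.rpow_mul (by positivity)]
          exact Nat.floor_le (by positivity)
        · simp
    _ ≤ (x / c) ^ l₀ / (1 - x / c) := sum_range_ite_pow_div_pow_le hx hxc l₀ n
    _ ≤ k - c := by rw [div_le_iff₀ (sub_pos.2 hρ)]; exact hl₀.le
  obtain ⟨w, hw⟩ := exists_biAperiodic_of_sum_div_pow_le hc hcrit
  refine ⟨l₀, w, fun l hl => ?_⟩
  have hN : N l < sInf (returnTimes w l) := hw.lt_sInf_returnTimes l
  simp only [N, if_pos hl] at hN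
  calc k ^ (θ * l) < ⌊k ^ (θ * l)⌋₊ + 1 := Nat.lt_floor_add_one _
    _ ≤ sInf (returnTimes w l) := by exact_mod_cast hN

end RecurrenceTime

theorem exists_word_with_large_recurrence_time_general {A : Type*} [Fintype A]
    (k : ℕ) (hk : Fintype.card A = k) (hk2 : 2 ≤ k)
    (δ : ℝ) (hδ1 : δ < 1)
    (φ : ℕ → ℝ)
    (hlim : ∀ ε : ℝ, 0 < ε → ∀ᶠ l : ℕ in Filter.atTop,
      Real.log (φ l) / l ≤ δ * Real.log k + ε) :
    ∃ (l₀ : ℕ) (w : ℤ → A), ∀ l : ℕ, l₀ ≤ l →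
      φ l ≤ (sInf {s : ℕ | 1 ≤ s ∧ ∃ i : ℤ, ∀ j : ℕ, j ≤ l →
        w (i + s + j) = w (i + j)} : ℕ) := by
  subst hk
  obtain ⟨l₁, hφ⟩ := Filter.eventually_atTop.1 <| eventually_le_rpow_of_log_div_le
    (by exact_mod_cast hk2) (by linarith : δ < (1 + δ) / 2) hlim
  obtain ⟨l₀, w, hw⟩ := RecurrenceTime.exists_rpow_lt_sInf_returnTimes (A := A)
    (by linarith : (1 + δ) / 2 < 1) (by omega)
  exact ⟨max l₀ l₁, w, fun l hl =>
    (hφ l (le_of_max_le_right hl)).trans (hw l (le_of_max_le_left hl)).le⟩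

/-- Theorem 1.1: If `φ : ℕ → [0,∞)` is non-decreasing with
`limsup (1/l)·ln φ(l) ≤ δ·ln k` for some `0 < δ < 1`, then there exist `l₀` and a
biinfinite word `w` over an alphabet of `k ≥ 2` symbols such that `R_w(l) ≥ φ(l)`
for every `l ≥ l₀`. -/
theorem exists_word_with_large_recurrence_time {A : Type*} [Fintype A]
    (k : ℕ) (hk : Fintype.card A = k) (hk2 : 2 ≤ k)
    (δ : ℝ) (hδ0 : 0 < δ) (hδ1 : δ < 1)
    (φ : ℕ → ℝ) (hmono : Monotone φ) (hnonneg : ∀ l : ℕ, 0 ≤ φ l)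
    (hlim : ∀ ε : ℝ, 0 < ε → ∀ᶠ l : ℕ in Filter.atTop,
      Real.log (φ l) / l ≤ δ * Real.log k + ε) :
    ∃ (l₀ : ℕ) (w : ℤ → A), ∀ l : ℕ, l₀ ≤ l →
      φ l ≤ (sInf {s : ℕ | 1 ≤ s ∧ ∃ i : ℤ, ∀ j : ℕ, j ≤ l →
        w (i + s + j) = w (i + j)} : ℕ) :=
  exists_word_with_large_recurrence_time_general k hk hk2 δ hδ1 φ hlim
end
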